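/- For M, N ⊆ [m] with |M| + |N| ≥ 2 and D = aΔ_M + bΔ_N, every codeword of the binary Gray image Φ(C_D) has Hamming weight divisible by 4, hence Φ(C_D) is self-orthogonal. -/

import Mathlib

open Finset

/-- The non-unital commutative ring `I` of order 4, with elements `0, a, b, c`. -/
inductive Ri : Type
  | zero | a | b | c
deriving DecidableEq

instance : Fintype Ri where
  elems := {Ri.zero, Ri.a, Ri.b, Ri.c}
  complete := fun x => by cases x <;> simp

namespace Ri

/-- Addition table of `I` (the Klein four-group). -/
def add' : Ri → Ri → Ri
  | .zero, x => x
  | x, .zero => x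
  | .a, .a => .zero
  | .a, .b => .c
  | .a, .c => .b
  | .b, .a => .c
  | .b, .b => .zero
  | .b, .c => .a
  | .c, .a => .b
  | .c, .b => .a
  | .c, .c => .zero

/-- Multiplication table of `I`: `a·a = b`, `a·c = c·a = b`, `c·c = b`, all else `0`. -/
def mul' : Ri → Ri → Ri
  | .a, .a => .b
  | .a, .c => .b
  | .c, .a => .b
  | .c, .c => .b
  | _, _ => .zero

instance : Zero Ri := ⟨Ri.zero⟩
instance : Add Ri := ⟨add'⟩
instance : Mul Ri := ⟨mul'⟩
instance : Neg Ri := ⟨fun x => x⟩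

instance : NonUnitalCommRing Ri where
  add_assoc := by decide
  zero_add := by decide
  add_zero := by decide
  add_comm := by decide
  neg_add_cancel := by decide
  left_distrib := by decide
  right_distrib := by decide
  zero_mul := by decide
  mul_zero := by decide
  mul_assoc := by decide
  mul_comm := by decide
  nsmul := nsmulRec
  zsmul := zsmulRec

/-- The action of `𝔽₂` on `I`: `0·x = 0` and `1·x = x`. -/
def smulF (s : ZMod 2) (x : Ri) : Ri := if s = 1 then x else 0

/-- The element `a·s + b·t` of `I`, for `s, t ∈ 𝔽₂`. -/
def ofPair (s t : ZMod 2) : Ri := smulF s Ri.a + smulF t Ri.b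

/-- The Gray map `Φ(a·s + b·t) = (t, s + t)`. -/
def gray : Ri → ZMod 2 × ZMod 2
  | .zero => (0, 0)
  | .a => (0, 1)
  | .b => (1, 1)
  | .c => (1, 0)

end Ri

/-- Hamming weight of a pair of bits. -/
def wt2 (p : ZMod 2 × ZMod 2) : ℕ :=
  (if p.1 = 1 then 1 else 0) + (if p.2 = 1 then 1 else 0)

/-- Lee weight of a vector over `I`, i.e. the Hamming weight of its Gray image. -/
def leeWt {m : ℕ} (x : Fin m → Ri) : ℕ := ∑ i, wt2 (Ri.gray (x i))

/-- The vector `aα + bβ ∈ I^m`. -/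
def vecI {m : ℕ} (α β : Fin m → ZMod 2) : Fin m → Ri := fun i => Ri.ofPair (α i) (β i)

/-- Support of a binary vector. -/
def suppF {m : ℕ} (v : Fin m → ZMod 2) : Finset (Fin m) :=
  Finset.univ.filter (fun i => v i = 1)

/-- The simplicial complex generated by `M`. -/
def deltaF {m : ℕ} (M : Finset (Fin m)) : Finset (Fin m → ZMod 2) :=
  Finset.univ.filter (fun w => suppF w ⊆ M)

/-- The codeword of `C_D` associated to `v ∈ I^m`, where the defining set `D`
is given as a set of pairs `(t₁, t₂)` representing `a·t₁ + b·t₂ ∈ I^m`. -/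
def cD {m : ℕ} (D : Finset ((Fin m → ZMod 2) × (Fin m → ZMod 2))) (v : Fin m → Ri) :
    {p // p ∈ D} → Ri := fun p => ∑ i, v i * vecI p.1.1 p.1.2 i

/-- Lee weight of a codeword indexed by the defining set `D`. -/
def leeWtC {m : ℕ} {D : Finset ((Fin m → ZMod 2) × (Fin m → ZMod 2))}
    (c : {p // p ∈ D} → Ri) : ℕ := ∑ p, wt2 (Ri.gray (c p))


namespace GrayAux

/-- The `a`-coordinate of an element of `Ri`. -/
def sOf : Ri → ZMod 2
  | .a => 1
  | .c => 1
  | _ => 0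

/-- `x ↦ smulF x b` as an additive monoid hom. -/
def bHom : ZMod 2 →+ Ri where
  toFun x := Ri.smulF x Ri.b
  map_zero' := by decide
  map_add' := by decide

lemma mul_ofPair : ∀ (x : Ri) (s t : ZMod 2), x * Ri.ofPair s t = bHom (sOf x * s) := by
  decide

lemma cD_eq {m : ℕ} (D : Finset ((Fin m → ZMod 2) × (Fin m → ZMod 2))) (v : Fin m → Ri)
    (p : {p // p ∈ D}) : cD D v p = bHom (∑ i, sOf (v i) * p.1.1 i) := by
  show (∑ i, v i * vecI p.1.1 p.1.2 i) = _
  rw [map_sum]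
  exact Finset.sum_congr rfl fun i _ => mul_ofPair _ _ _

lemma wt_b : ∀ x : ZMod 2, wt2 (Ri.gray (bHom x)) = if x = 1 then 2 else 0 := by decide

lemma suppF_add {m : ℕ} {M : Finset (Fin m)} {w e : Fin m → ZMod 2}
    (hw : suppF w ⊆ M) (he : suppF e ⊆ M) : suppF (w + e) ⊆ M := by
  intro i hi
  simp only [suppF, Finset.mem_filter, Finset.mem_univ, true_and, Pi.add_apply] at hi hw he
  have key : ∀ x y : ZMod 2, x + y = 1 → x = 1 ∨ y = 1 := by decide
  rcases key _ _ hi with h | h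
  · exact hw (Finset.mem_filter.mpr ⟨Finset.mem_univ _, h⟩)
  · exact he (Finset.mem_filter.mpr ⟨Finset.mem_univ _, h⟩)

lemma mem_deltaF {m : ℕ} {M : Finset (Fin m)} {w : Fin m → ZMod 2} :
    w ∈ deltaF M ↔ suppF w ⊆ M := by simp [deltaF]

lemma keyAux {m : ℕ} (M N : Finset (Fin m)) (sig : Fin m → ZMod 2)
    (e1 e2 : Fin m → ZMod 2) (he1M : suppF e1 ⊆ M) (he2N : suppF e2 ⊆ N)
    (hne : e1 ≠ 0 ∨ e2 ≠ 0) (hse : (∑ i, sig i * e1 i) = 0) :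
    (∑ q ∈ deltaF M ×ˢ deltaF N,
      (if (∑ i, sig i * q.1 i) = 1 then (2 : ZMod 4) else 0)) = 0 := by
  apply Finset.sum_involution (fun q _ => (q.1 + e1, q.2 + e2))
  · intro q _
    have hpres : (∑ i, sig i * (q.1 + e1) i) = ∑ i, sig i * q.1 i := by
      simp only [Pi.add_apply, mul_add, Finset.sum_add_distrib, hse, add_zero]
    rw [hpres]
    split <;> decide
  · intro q _ _
    rcases hne with h1 | h2
    · obtain ⟨i, hi⟩ := Function.ne_iff.mp h1
      intro hc
      have := congrArg (fun r => r.1 i) hc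
      simp only [Pi.add_apply] at this
      exact hi (by simpa using add_eq_left.mp this)
    · obtain ⟨i, hi⟩ := Function.ne_iff.mp h2
      intro hc
      have := congrArg (fun r => r.2 i) hc
      simp only [Pi.add_apply] at this
      exact hi (by simpa using add_eq_left.mp this)
  · intro q hq
    rw [Finset.mem_product] at hq ⊢
    exact ⟨mem_deltaF.mpr (suppF_add (mem_deltaF.mp hq.1) he1M),
      mem_deltaF.mpr (suppF_add (mem_deltaF.mp hq.2) he2N)⟩
  · intro q _
    have hcancel : ∀ (w e : Fin m → ZMod 2), w + e + e = w := by
      intro w e; funext i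
      have : ∀ x y : ZMod 2, x + y + y = x := by decide
      exact this _ _
    exact Prod.ext (hcancel _ _) (hcancel _ _)

/-- single-coordinate vector -/
def single {m : ℕ} (j : Fin m) : Fin m → ZMod 2 := fun i => if i = j then 1 else 0

lemma single_ne_zero {m : ℕ} (j : Fin m) : single j ≠ 0 := by
  intro hc
  have := congrFun hc j
  simp [single] at this

lemma suppF_single {m : ℕ} {j : Fin m} {M : Finset (Fin m)} (hj : j ∈ M) :
    suppF (single j) ⊆ M := by
  intro i hi
  simp only [suppF, single, Finset.mem_filter, Finset.mem_univ, true_and] at hi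
  by_cases h : i = j
  · subst h; exact hj
  · simp [h] at hi

lemma sum_mul_single {m : ℕ} (sig : Fin m → ZMod 2) (j : Fin m) :
    (∑ i, sig i * single j i) = sig j := by
  simp [single, mul_ite, Finset.sum_ite_eq']

lemma key {m : ℕ} (M N : Finset (Fin m)) (h : 2 ≤ M.card + N.card)
    (sig : Fin m → ZMod 2) :
    (∑ q ∈ deltaF M ×ˢ deltaF N,
      (if (∑ i, sig i * q.1 i) = 1 then (2 : ZMod 4) else 0)) = 0 := by
  rcases N.eq_empty_or_nonempty with hN | ⟨j, hj⟩
  · have hM : 2 ≤ M.card := by simp [hN] at h; omega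
    obtain ⟨j, hj, k, hk, hjk⟩ := Finset.one_lt_card.mp (show 1 < M.card by omega)
    by_cases hk0 : sig k = 0
    · exact keyAux M N sig (single k) 0 (suppF_single hk) (by simp [suppF])
        (Or.inl (single_ne_zero k)) (by rw [sum_mul_single]; exact hk0)
    · by_cases hj0 : sig j = 0
      · exact keyAux M N sig (single j) 0 (suppF_single hj) (by simp [suppF])
          (Or.inl (single_ne_zero j)) (by rw [sum_mul_single]; exact hj0)
      · have two : ∀ x : ZMod 2, x ≠ 0 → x = 1 := by decide
        have hj1 : sig j = 1 := two _ hj0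
        have hk1 : sig k = 1 := two _ hk0
        refine keyAux M N sig (single j + single k) 0
          (suppF_add (suppF_single hj) (suppF_single hk)) (by simp [suppF]) ?_ ?_
        · refine Or.inl fun hc => ?_
          have := congrFun hc j
          simp [single, hjk] at this
        · simp only [Pi.add_apply, mul_add, Finset.sum_add_distrib,
            sum_mul_single, hj1, hk1]
          decide
  · exact keyAux M N sig 0 (single j) (by simp [suppF]) (suppF_single hj)
      (Or.inr (single_ne_zero j)) (by simp)

lemma leeWtC_eq {m : ℕ} (M N : Finset (Fin m)) (v : Fin m → Ri) :
    leeWtC (cD (deltaF M ×ˢ deltaF N) v)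
      = ∑ q ∈ deltaF M ×ˢ deltaF N,
          (if (∑ i, sOf (v i) * q.1 i) = 1 then 2 else 0) := by
  unfold leeWtC
  rw [← Finset.sum_coe_sort (deltaF M ×ˢ deltaF N)
      (fun q => if (∑ i, sOf (v i) * q.1 i) = 1 then 2 else 0)]
  exact Finset.sum_congr rfl fun p _ => by rw [cD_eq, wt_b]

lemma part1 {m : ℕ} (M N : Finset (Fin m)) (h : 2 ≤ M.card + N.card) (v : Fin m → Ri) :
    4 ∣ leeWtC (cD (deltaF M ×ˢ deltaF N) v) := by
  rw [← ZMod.natCast_eq_zero_iff, leeWtC_eq, Nat.cast_sum]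
  rw [← key M N h (fun i => sOf (v i))]
  refine Finset.sum_congr rfl fun q _ => ?_
  split <;> simp

/-- integer-valued inner product contribution of a pair of ring elements -/
def ip (x y : Ri) : ℕ :=
  (if (Ri.gray x).1 = 1 ∧ (Ri.gray y).1 = 1 then 1 else 0)
    + (if (Ri.gray x).2 = 1 ∧ (Ri.gray y).2 = 1 then 1 else 0)

lemma wt_add : ∀ x y : Ri, wt2 (Ri.gray x) + wt2 (Ri.gray y)
    = wt2 (Ri.gray (x + y)) + 2 * ip x y := by decide

lemma ip_cast : ∀ x y : Ri, ((ip x y : ℕ) : ZMod 2)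
    = (Ri.gray x).1 * (Ri.gray y).1 + (Ri.gray x).2 * (Ri.gray y).2 := by decide

lemma cD_add {m : ℕ} (D : Finset ((Fin m → ZMod 2) × (Fin m → ZMod 2))) (u v : Fin m → Ri)
    (p : {p // p ∈ D}) : cD D (fun i => u i + v i) p = cD D u p + cD D v p := by
  show (∑ i, (u i + v i) * vecI p.1.1 p.1.2 i)
      = (∑ i, u i * vecI p.1.1 p.1.2 i) + (∑ i, v i * vecI p.1.1 p.1.2 i)
  rw [← Finset.sum_add_distrib]
  exact Finset.sum_congr rfl fun i _ => add_mul _ _ _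

end GrayAux

theorem gray_image_self_orthogonal (m : ℕ) (M N : Finset (Fin m))
    (h : 2 ≤ M.card + N.card) :
    let D := deltaF M ×ˢ deltaF N
    (∀ v : Fin m → Ri, 4 ∣ leeWtC (cD D v)) ∧
    (∀ u v : Fin m → Ri,
      (∑ p, ((Ri.gray (cD D u p)).1 * (Ri.gray (cD D v p)).1
        + (Ri.gray (cD D u p)).2 * (Ri.gray (cD D v p)).2)) = (0 : ZMod 2)) := by
  intro D
  constructor
  · exact fun v => GrayAux.part1 M N h v
  · intro u v
    set cu := cD D u with hcu
    set cv := cD D v with hcv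
    have h1 : 4 ∣ leeWtC cu := GrayAux.part1 M N h u
    have h2 : 4 ∣ leeWtC cv := GrayAux.part1 M N h v
    have h3 : 4 ∣ leeWtC (cD D (fun i => u i + v i)) := GrayAux.part1 M N h _
    have hsum : leeWtC cu + leeWtC cv
        = leeWtC (cD D (fun i => u i + v i)) + 2 * ∑ p, GrayAux.ip (cu p) (cv p) := by
      unfold leeWtC
      rw [← Finset.sum_add_distrib, Finset.mul_sum, ← Finset.sum_add_distrib]
      refine Finset.sum_congr rfl fun p _ => ?_
      rw [GrayAux.cD_add D u v p]
      exact GrayAux.wt_add _ _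
    have hdvd : 2 ∣ ∑ p, GrayAux.ip (cu p) (cv p) := by omega
    calc (∑ p, ((Ri.gray (cu p)).1 * (Ri.gray (cv p)).1
          + (Ri.gray (cu p)).2 * (Ri.gray (cv p)).2))
        = ∑ p, ((GrayAux.ip (cu p) (cv p) : ℕ) : ZMod 2) :=
          Finset.sum_congr rfl fun p _ => (GrayAux.ip_cast _ _).symm
      _ = ((∑ p, GrayAux.ip (cu p) (cv p) : ℕ) : ZMod 2) := (Nat.cast_sum _ _).symm
      _ = 0 := (ZMod.natCast_eq_zero_iff _ _).mpr hdvd
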